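/- Let m = (m₁,m₂) ∈ ℕ². Call Γ^{(m)} ⊆ K^{(m)} = {γ ∈ ℤ² : 0 ≤ γ₁ ≤ 2m₁, −2m₂ < γ₂ ≤ 2m₂} a spectral index set for I^{(m)} if γ₁+γ₂ is even for all γ ∈ Γ^{(m)} and {χ^{(m)}_γ : γ ∈ Γ^{(m)}} is an orthogonal basis of (L(I^{(m)}), ⟨·,·⟩_w). Then every spectral index set Γ^{(m)} is of the form Γ^{(m)}_Ω = (Γ^{(m)}_□ \ Ω) ∪ {γ ∈ K^{(m)} : γ* ∈ Ω} for some Ω ⊆ Γ^{(m)}_□, where γ* = (2m₁−γ₁, (γ₂+2m₂) mod 4m₂ taken in (−2m₂,2m₂]); and the norms satisfy ‖χ^{(m)}_γ‖²_w = 1 if γ₁ ∈ {0, 2m₁} and ‖χ^{(m)}_γ‖²_w = 1/2 otherwise. -/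

import Mathlib

noncomputable section

/-- The rhodonea curve `ρ^{(m)}_α`. -/
def rho (m₁ m₂ : ℕ) (α : ℝ) (t : ℝ) : ℝ × ℝ :=
  (Real.cos (m₂ * t) * Real.cos (m₁ * t - α * Real.pi),
   Real.cos (m₂ * t) * Real.sin (m₁ * t - α * Real.pi))

/-- The sampling parameters `t^{(m)}_l = l π / (2 m₁ m₂)`. -/
def tSample (m₁ m₂ : ℕ) (l : ℕ) : ℝ := l * Real.pi / (2 * m₁ * m₂)

/-- The set `S^{(m)}(t)` of parameters in `[0, 2π)` hitting the same point as `t`. -/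
def Sset (m₁ m₂ : ℕ) (α t : ℝ) : Set ℝ :=
  {s | s ∈ Set.Ico (0 : ℝ) (2 * Real.pi) ∧ rho m₁ m₂ α s = rho m₁ m₂ α t}

/-- The sample point set `LS^{(m)}_α` along the rhodonea curve. -/
def LSa (m₁ m₂ : ℕ) (α : ℝ) : Set (ℝ × ℝ) :=
  {p | ∃ l : ℕ, l < 4 * m₁ * m₂ ∧ p = rho m₁ m₂ α (tSample m₁ m₂ l)}

/-- The nodal index set `I^{(m)}` as a set. -/
def Idx (m₁ m₂ : ℕ) : Set (ℤ × ℤ) :=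
  {i | 0 ≤ i.1 ∧ i.1 ≤ (m₁ : ℤ) ∧ -(2 * (m₂ : ℤ)) < i.2 ∧ i.2 ≤ 2 * (m₂ : ℤ) ∧
       (i.1 = (m₁ : ℤ) → i.2 ≤ 0) ∧ Even (i.1 + i.2)}

/-- The nodal index set `I^{(m)}` as a finset. -/
def IdxF (m₁ m₂ : ℕ) : Finset (ℤ × ℤ) :=
  (Finset.Icc (0 : ℤ) (m₁ : ℤ) ×ˢ Finset.Ioc (-(2 * (m₂ : ℤ))) (2 * (m₂ : ℤ))).filter
    (fun i => (i.1 = (m₁ : ℤ) → i.2 ≤ 0) ∧ Even (i.1 + i.2))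

/-- Radial coordinate `r^{(m₁)}_{i₁} = cos(i₁ π / (2 m₁))`. -/
def rI (m₁ : ℕ) (i₁ : ℤ) : ℝ := Real.cos (i₁ * Real.pi / (2 * m₁))

/-- Angular coordinate `θ^{(m₂)}_{i₂} = i₂ π / (2 m₂)`. -/
def thetaI (m₂ : ℕ) (i₂ : ℤ) : ℝ := i₂ * Real.pi / (2 * m₂)

/-- The rhodonea node `x^{(m)}_i` in Cartesian coordinates. -/
def node (m₁ m₂ : ℕ) (i : ℤ × ℤ) : ℝ × ℝ :=
  (rI m₁ i.1 * Real.cos (thetaI m₂ i.2), rI m₁ i.1 * Real.sin (thetaI m₂ i.2))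

/-- The rhodonea node set `LS^{(m)}`. -/
def LS (m₁ m₂ : ℕ) : Set (ℝ × ℝ) := node m₁ m₂ '' Idx m₁ m₂

/-- Chebyshev polynomial of the first kind, `T_n(r) = cos(n arccos r)`. -/
def chebT (n : ℕ) (r : ℝ) : ℝ := Real.cos (n * Real.arccos r)

/-- The closed unit disk `𝔻 ⊆ ℝ²`. -/
def closedDisk : Set (ℝ × ℝ) := {x | x.1 ^ 2 + x.2 ^ 2 ≤ 1}

/-- The weights `w^{(m)}_i`. -/
def wgt (m₁ m₂ : ℕ) (i : ℤ × ℤ) : ℝ :=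
  if i.1 = 0 then 1 / (4 * m₁ * m₂) else 2 / (4 * m₁ * m₂)

/-- The discrete basis functions `χ^{(m)}_γ(i)`. -/
def chi (m₁ m₂ : ℕ) (γ i : ℤ × ℤ) : ℂ :=
  (Real.cos (γ.1 * i.1 * Real.pi / (2 * m₁)) : ℂ) *
    Complex.exp (Complex.I * (γ.2 * i.2 * Real.pi / (2 * m₂)))

/-- The discrete inner product `⟨f, g⟩_w` on `L(I^{(m)})`. -/
def innerW (m₁ m₂ : ℕ) (f g : ℤ × ℤ → ℂ) : ℂ :=
  ∑ i ∈ IdxF m₁ m₂, (wgt m₁ m₂ i : ℂ) * f i * (starRingEnd ℂ) (g i)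

/-- The rectangular spectral index set `Γ^{(m)}_□`. -/
def GammaSq (m₁ m₂ : ℕ) : Finset (ℤ × ℤ) :=
  (Finset.Icc (0 : ℤ) (2 * (m₁ : ℤ)) ×ˢ Finset.Ioc (-(m₂ : ℤ)) (m₂ : ℤ)).filter
    (fun γ => Even (γ.1 + γ.2))

/-- The full frequency box `K^{(m)}`. -/
def KSet (m₁ m₂ : ℕ) : Finset (ℤ × ℤ) :=
  Finset.Icc (0 : ℤ) (2 * (m₁ : ℤ)) ×ˢ Finset.Ioc (-(2 * (m₂ : ℤ))) (2 * (m₂ : ℤ))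

/-- The flip (glide-reflection) operator `γ ↦ γ*` on `K^{(m)}`, with second
coordinate `(γ₂ + 2m₂) mod 4m₂` taken in `(-2m₂, 2m₂]`. -/
def flipOp (m₁ m₂ : ℕ) (γ : ℤ × ℤ) : ℤ × ℤ :=
  (2 * (m₁ : ℤ) - γ.1, if γ.2 ≤ 0 then γ.2 + 2 * (m₂ : ℤ) else γ.2 - 2 * (m₂ : ℤ))

/-- `Γ` is a spectral index set for `I^{(m)}`: a subset of `K^{(m)}` satisfying the
parity condition whose functions `χ^{(m)}_γ` form an orthogonal basis of `L(I^{(m)})`. -/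
def IsSpectral (m₁ m₂ : ℕ) (Γ : Finset (ℤ × ℤ)) : Prop :=
  Γ ⊆ KSet m₁ m₂ ∧ (∀ γ ∈ Γ, Even (γ.1 + γ.2)) ∧
  (∀ γ ∈ Γ, ∀ γ' ∈ Γ, γ ≠ γ' → innerW m₁ m₂ (chi m₁ m₂ γ) (chi m₁ m₂ γ') = 0) ∧
  LinearIndependent ℂ (fun γ : ↥Γ => fun i : ↥(IdxF m₁ m₂) => chi m₁ m₂ γ.1 i.1) ∧
  Submodule.span ℂ
    (Set.range (fun γ : ↥Γ => fun i : ↥(IdxF m₁ m₂) => chi m₁ m₂ γ.1 i.1)) = ⊤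

/-- The real discrete basis functions `χ^{(m)}_{ℛ,γ}(i)` (for `γ ∈ Γ`). -/
def chiR (m₁ m₂ : ℕ) (Γ : Finset (ℤ × ℤ)) (γ i : ℤ × ℤ) : ℝ :=
  Real.cos (γ.1 * i.1 * Real.pi / (2 * m₁)) *
    (if ((γ.1, -γ.2) ∈ Γ ∧ 0 ≤ γ.2) ∨ ((γ.1, -γ.2) ∉ Γ ∧ γ.1 ≤ (m₁ : ℤ))
     then Real.cos (γ.2 * i.2 * Real.pi / (2 * m₂))
     else Real.sin (γ.2 * i.2 * Real.pi / (2 * m₂)))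

/-- The Chebyshev–Fourier basis functions `X_γ(r, θ) = T_{γ₁}(r) e^{i γ₂ θ}`. -/
def Xfun (γ : ℤ × ℤ) (p : ℝ × ℝ) : ℂ :=
  (Real.cos (γ.1 * Real.arccos p.1) : ℂ) * Complex.exp (Complex.I * (γ.2 * p.2))

/-- The real Chebyshev–Fourier basis functions `X_{ℛ,γ}` (for `γ ∈ Γ`). -/
def XRfun (m₁ : ℕ) (Γ : Finset (ℤ × ℤ)) (γ : ℤ × ℤ) (p : ℝ × ℝ) : ℝ :=
  Real.cos (γ.1 * Real.arccos p.1) *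
    (if ((γ.1, -γ.2) ∈ Γ ∧ 0 ≤ γ.2) ∨ ((γ.1, -γ.2) ∉ Γ ∧ γ.1 ≤ (m₁ : ℤ))
     then Real.cos (γ.2 * p.2) else Real.sin (γ.2 * p.2))

/-- The Lagrange functions `L^{(m)}_i`. -/
def Lag (m₁ m₂ : ℕ) (Γ : Finset (ℤ × ℤ)) (i : ℤ × ℤ) (p : ℝ × ℝ) : ℂ :=
  (wgt m₁ m₂ i : ℂ) *
    ∑ γ ∈ Γ, ((starRingEnd ℂ) (chi m₁ m₂ γ i) /
      innerW m₁ m₂ (chi m₁ m₂ γ) (chi m₁ m₂ γ)) * Xfun γ p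

/-- The complex-valued version of `X_{ℛ,γ}`. -/
def XRc (m₁ : ℕ) (Γ : Finset (ℤ × ℤ)) (γ : ℤ × ℤ) (p : ℝ × ℝ) : ℂ :=
  (XRfun m₁ Γ γ p : ℂ)

/-- The real Lagrange functions `L^{(m)}_{ℛ,i}`. -/
def LagR (m₁ m₂ : ℕ) (Γ : Finset (ℤ × ℤ)) (i : ℤ × ℤ) (p : ℝ × ℝ) : ℂ :=
  (wgt m₁ m₂ i : ℂ) *
    ∑ γ ∈ Γ, ((chiR m₁ m₂ Γ γ i /
        (∑ j ∈ IdxF m₁ m₂, wgt m₁ m₂ j * chiR m₁ m₂ Γ γ j ^ 2) : ℝ) : ℂ) * XRc m₁ Γ γ p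

end

/-!
On the nodes, `χ_{γ*} = χ_γ`: the first factor changes by `(-1)^{i₁}` and the second by
`(-1)^{i₂}`, and `i₁ + i₂` is even. Since the `χ_γ` of a spectral set are linearly independent,
`Γ` never contains both `γ` and `γ*`. Every admissible `γ ∈ K \ Γ_□` has `γ* ∈ Γ_□`, and `*` is
injective on `K`, so for `Ω = Γ_□ \ Γ` the set `Γ` lies in `(Γ_□ \ Ω) ∪ {γ | γ* ∈ Ω}`, which has at
most `|Γ_□| = (2m₁+1)m₂ = |I| = |Γ|` elements; hence equality.

For the norms, `|χ_γ|² = cos²(γ₁ i₁ π / 2m₁)`. Counting the nodes above each `i₁`, the weights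
become the trapezoidal weights `(1, 2, …, 2, 1) / 4m₁`, and by the symmetry `i₁ ↦ 2m₁ - i₁` the
sum is the mean of `cos²` over a full period: `1/2`, or `1` when `2m₁ ∣ γ₁`.
-/

open Finset

theorem Finset.eq_sdiff_union_filter_of_card_le {α : Type*} [DecidableEq α]
    {K S Γ : Finset α} {φ : α → α} (hφ : Set.InjOn φ K) (hΓK : Γ ⊆ K)
    (hmaps : ∀ x ∈ Γ, x ∉ S → φ x ∈ S \ Γ) (hcard : #S ≤ #Γ) :
    Γ = (S \ (S \ Γ)) ∪ K.filter (fun x => φ x ∈ S \ Γ) := by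
  refine eq_of_subset_of_card_le (fun x hx => ?_) ?_
  · by_cases hxS : x ∈ S
    · exact mem_union_left _ (mem_sdiff.2 ⟨hxS, fun h => (mem_sdiff.1 h).2 hx⟩)
    · exact mem_union_right _ (mem_filter.2 ⟨hΓK hx, hmaps x hx hxS⟩)
  · calc #((S \ (S \ Γ)) ∪ K.filter (fun x => φ x ∈ S \ Γ))
        ≤ #(S \ (S \ Γ)) + #(K.filter (fun x => φ x ∈ S \ Γ)) := card_union_le _ _
      _ ≤ #(S \ (S \ Γ)) + #(S \ Γ) := by
        refine Nat.add_le_add_left (card_le_card_of_injOn φ (fun x hx => ?_) ?_) _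
        · exact mem_coe.2 (mem_filter.1 hx).2
        · exact hφ.mono (coe_subset.2 (filter_subset _ _))
      _ = #S := card_sdiff_add_card_eq_card sdiff_subset
      _ ≤ #Γ := hcard

theorem Finset.card_filter_product {α β : Type*} (s : Finset α) (t : Finset β) (p : α × β → Prop)
    [DecidablePred p] :
    #((s ×ˢ t).filter p) = ∑ a ∈ s, #(t.filter (fun b => p (a, b))) := by
  simp only [card_filter, sum_product]

theorem Int.card_filter_even_add_Ioc (c a : ℤ) (k : ℕ) :
    #((Ioc a (a + 2 * k)).filter (fun x => Even (c + x))) = k := by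
  conv_rhs => rw [← card_range k]
  apply card_nbij' (fun x => ((x - a - 1) / 2).toNat) (fun j => a + 1 + (a + 1 + c) % 2 + 2 * j) <;>
    intro x hx <;>
    simp only [mem_coe, mem_filter, mem_Ioc, mem_range, Int.even_iff] at * <;>
    omega

theorem Int.sum_Ico_zero_eq_sum_range {M : Type*} [AddCommMonoid M] (N : ℕ) (f : ℤ → M) :
    ∑ a ∈ Ico (0 : ℤ) N, f a = ∑ k ∈ Finset.range N, f k := by
  rw [Int.Ico_eq_finset_map, sum_map]
  simp

theorem sum_Icc_trapezoid_eq_sum_Ico {M : Type*} [AddCommMonoid M] {n : ℤ} (hn : 0 < n)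
    (f : ℤ → M) (hf : ∀ a, f (2 * n - a) = f a) :
    ∑ a ∈ Icc 0 n, (if a = 0 ∨ a = n then 1 else 2) • f a = ∑ a ∈ Ico 0 (2 * n), f a := by
  have hinner : Ioo 0 n = (Icc 0 n).filter (fun a => ¬(a = 0 ∨ a = n)) := by
    ext a; simp only [mem_Ioo, mem_filter, mem_Icc]; omega
  have hreflect : ∑ a ∈ Ioo 0 n, f a = ∑ a ∈ Ioo n (2 * n), f a :=
    sum_nbij' (2 * n - ·) (2 * n - ·) (by simp; omega) (by simp; omega) (by simp) (by simp)
      (fun a _ => (hf a).symm ▸ rfl)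
  calc ∑ a ∈ Icc 0 n, (if a = 0 ∨ a = n then 1 else 2) • f a
      = ∑ a ∈ Icc 0 n, f a + ∑ a ∈ Ioo 0 n, f a := by
        rw [hinner, sum_filter, ← sum_add_distrib]
        refine sum_congr rfl fun a _ => ?_
        split_ifs <;> simp [two_smul]
    _ = ∑ a ∈ Icc 0 n, f a + ∑ a ∈ Ioo n (2 * n), f a := by rw [hreflect]
    _ = ∑ a ∈ Ico 0 (2 * n), f a := by
        rw [← sum_union (disjoint_left.2 fun a ha hb => by simp at ha hb; omega)]
        congr 1
        ext a; simp only [mem_union, mem_Icc, mem_Ioo, mem_Ico]; omega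

theorem Int.dvd_iff_eq_zero_or_eq {n g : ℤ} (hn : 0 < n) (h₀ : 0 ≤ g) (h₁ : g ≤ n) :
    n ∣ g ↔ g = 0 ∨ g = n := by
  constructor
  · rintro ⟨q, rfl⟩
    have hq₀ : 0 ≤ q := by nlinarith
    have hq₁ : q ≤ 1 := by nlinarith
    interval_cases q <;> simp
  · rintro (rfl | rfl) <;> simp

theorem sum_range_cos_two_pi_int_mul_div (N : ℕ) (g : ℤ) :
    ∑ k ∈ range N, Real.cos (2 * Real.pi * g * k / N) = if (N : ℤ) ∣ g then (N : ℝ) else 0 := by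
  rcases Nat.eq_zero_or_pos N with rfl | hN
  · simp
  have hN' : (N : ℂ) ≠ 0 := Nat.cast_ne_zero.2 hN.ne'
  split_ifs with hdvd
  · obtain ⟨q, rfl⟩ := hdvd
    have hterm : ∀ k ∈ range N, Real.cos (2 * Real.pi * ((N * q : ℤ) : ℝ) * k / N) = 1 := by
      intro k _
      rw [← Real.cos_int_mul_two_pi (q * k)]
      congr 1
      push_cast
      field_simp
    rw [sum_congr rfl hterm]
    simp
  · set z := Complex.exp (2 * Real.pi * g / N * Complex.I)
    have hz : z ≠ 1 := by
      rw [Ne, Complex.exp_eq_one_iff]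
      rintro ⟨n, hn⟩
      have hπI : 2 * Real.pi * Complex.I ≠ 0 := by simp [Real.pi_ne_zero]
      have hg : (g : ℂ) = N * n := by
        field_simp at hn
        linear_combination hn
      exact hdvd ⟨n, by exact_mod_cast hg⟩
    have hzN : z ^ N = 1 := by
      rw [← Complex.exp_nat_mul, ← Complex.exp_int_mul_two_pi_mul_I g]
      congr 1
      field_simp
    have hgeom : ∑ k ∈ range N, z ^ k = 0 := by rw [geom_sum_eq hz, hzN, sub_self, zero_div]
    have hre : ∀ k : ℕ, Real.cos (2 * Real.pi * g * k / N) = (z ^ k).re := by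
      intro k
      rw [← Complex.exp_nat_mul, ← Complex.exp_ofReal_mul_I_re]
      push_cast
      ring_nf
    simp only [hre, ← Complex.re_sum, hgeom, Complex.zero_re]

theorem sum_range_cos_sq (n : ℕ) (g : ℤ) :
    ∑ k ∈ range (2 * n), Real.cos (g * k * Real.pi / (2 * n)) ^ 2
      = if (2 * n : ℤ) ∣ g then (2 * n : ℝ) else n := by
  have h := sum_range_cos_two_pi_int_mul_div (2 * n) g
  simp only [Real.cos_sq, sum_add_distrib, ← sum_div, sum_const, card_range, nsmul_eq_mul]
  have harg : ∀ k : ℕ,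
      2 * ((g : ℝ) * k * Real.pi / (2 * n)) = 2 * Real.pi * g * k / (2 * n : ℕ) := by
    intro k; push_cast; ring
  simp only [harg, h]
  push_cast
  split_ifs <;> ring

theorem card_GammaSq (m₁ m₂ : ℕ) : #(GammaSq m₁ m₂) = (2 * m₁ + 1) * m₂ := by
  have hfiber : ∀ a : ℤ, #((Ioc (-(m₂ : ℤ)) m₂).filter (fun b => Even (a + b))) = m₂ := fun a => by
    simpa [show -(m₂ : ℤ) + 2 * m₂ = m₂ by ring] using Int.card_filter_even_add_Ioc a (-m₂) m₂
  rw [GammaSq, card_filter_product]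
  simp only [hfiber, sum_const, Int.card_Icc, smul_eq_mul]
  congr 1

theorem card_fiber_IdxF (m₁ m₂ : ℕ) (a : ℤ) :
    #((Ioc (-(2 * (m₂ : ℤ))) (2 * m₂)).filter
        (fun b => (a = m₁ → b ≤ 0) ∧ Even (a + b))) = if a = m₁ then m₂ else 2 * m₂ := by
  split_ifs with ha
  · convert Int.card_filter_even_add_Ioc a (-(2 * m₂)) m₂ using 2
    ext b
    simp only [mem_filter, mem_Ioc, Int.even_iff]
    omega
  · convert Int.card_filter_even_add_Ioc a (-(2 * m₂)) (2 * m₂) using 2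
    ext b
    simp only [mem_filter, mem_Ioc, Int.even_iff]
    push_cast
    omega

theorem sum_IdxF_eq_sum_fst {M : Type*} [AddCommMonoid M] (m₁ m₂ : ℕ) (F : ℤ → M) :
    ∑ i ∈ IdxF m₁ m₂, F i.1 = ∑ a ∈ Icc (0 : ℤ) m₁, (if a = m₁ then m₂ else 2 * m₂) • F a := by
  rw [IdxF, sum_filter, sum_product]
  refine sum_congr rfl fun a _ => ?_
  dsimp only
  rw [← sum_filter, sum_const, card_fiber_IdxF]

theorem card_IdxF (m₁ m₂ : ℕ) : #(IdxF m₁ m₂) = (2 * m₁ + 1) * m₂ := by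
  rw [card_eq_sum_ones, sum_IdxF_eq_sum_fst m₁ m₂ (fun _ => 1), ← Ico_insert_right (by simp),
    sum_insert (by simp)]
  simp only [smul_eq_mul, mul_one, if_pos]
  rw [sum_congr rfl fun a ha => if_neg (mem_Ico.1 ha).2.ne, sum_const, Int.card_Ico]
  simp only [sub_zero, Int.toNat_natCast, smul_eq_mul]
  ring

theorem mem_KSet {m₁ m₂ : ℕ} {γ : ℤ × ℤ} :
    γ ∈ KSet m₁ m₂ ↔ (0 ≤ γ.1 ∧ γ.1 ≤ 2 * m₁) ∧ -(2 * (m₂ : ℤ)) < γ.2 ∧ γ.2 ≤ 2 * m₂ := by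
  simp [KSet]

theorem flipOp_injOn (m₁ m₂ : ℕ) : Set.InjOn (flipOp m₁ m₂) (KSet m₁ m₂) := by
  rintro ⟨a, b⟩ hab ⟨c, d⟩ hcd h
  simp only [mem_coe, mem_KSet] at hab hcd
  simp only [flipOp, Prod.mk.injEq] at h ⊢
  split_ifs at h <;> omega

theorem flipOp_ne_self {m₂ : ℕ} (hm₂ : m₂ ≠ 0) (m₁ : ℕ) (γ : ℤ × ℤ) : flipOp m₁ m₂ γ ≠ γ := by
  intro h
  have h2 := congrArg Prod.snd h
  simp only [flipOp] at h2
  split_ifs at h2 <;> omega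

theorem flipOp_mem_GammaSq {m₁ m₂ : ℕ} {γ : ℤ × ℤ} (hγ : γ ∈ KSet m₁ m₂) (heven : Even (γ.1 + γ.2))
    (hγS : γ ∉ GammaSq m₁ m₂) : flipOp m₁ m₂ γ ∈ GammaSq m₁ m₂ := by
  simp only [GammaSq, KSet, mem_filter, mem_product, mem_Icc, mem_Ioc, flipOp, Int.even_iff]
    at hγ heven hγS ⊢
  split_ifs <;> omega

theorem even_of_mem_IdxF {m₁ m₂ : ℕ} {i : ℤ × ℤ} (hi : i ∈ IdxF m₁ m₂) : Even (i.1 + i.2) :=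
  (mem_filter.1 hi).2.2

theorem chi_reflect {m₁ m₂ : ℕ} (hm₁ : m₁ ≠ 0) (hm₂ : m₂ ≠ 0) (γ i : ℤ × ℤ) (k : ℤ)
    (hk : Even (i.1 + k * i.2)) :
    chi m₁ m₂ (2 * m₁ - γ.1, γ.2 + 2 * m₂ * k) i = chi m₁ m₂ γ i := by
  have hcos : Real.cos (((2 * m₁ - γ.1 : ℤ) : ℝ) * i.1 * Real.pi / (2 * m₁))
      = (-1) ^ i.1 * Real.cos (γ.1 * i.1 * Real.pi / (2 * m₁)) := by
    rw [← Real.cos_int_mul_pi_sub]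
    congr 1
    push_cast
    field_simp
  have hexp : Complex.exp (Complex.I * (((γ.2 + 2 * m₂ * k : ℤ) : ℂ) * i.2 * Real.pi / (2 * m₂)))
      = (-1) ^ (k * i.2) * Complex.exp (Complex.I * (γ.2 * i.2 * Real.pi / (2 * m₂))) := by
    rw [← Complex.exp_pi_mul_I, ← Complex.exp_int_mul, ← Complex.exp_add]
    congr 1
    push_cast
    field_simp
    ring
  have hsign : ((-1 : ℂ) ^ i.1) * (-1) ^ (k * i.2) = 1 := by
    rw [← zpow_add₀ (by norm_num), hk.neg_one_zpow]
  simp only [chi, hcos, hexp, Complex.ofReal_mul, Complex.ofReal_zpow, Complex.ofReal_neg,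
    Complex.ofReal_one]
  linear_combination (Real.cos (γ.1 * i.1 * Real.pi / (2 * m₁)) : ℂ) *
    Complex.exp (Complex.I * (γ.2 * i.2 * Real.pi / (2 * m₂))) * hsign

theorem chi_flipOp {m₁ m₂ : ℕ} (hm₁ : m₁ ≠ 0) (hm₂ : m₂ ≠ 0) (γ : ℤ × ℤ) {i : ℤ × ℤ}
    (hi : Even (i.1 + i.2)) : chi m₁ m₂ (flipOp m₁ m₂ γ) i = chi m₁ m₂ γ i := by
  unfold flipOp
  split_ifs
  · simpa using chi_reflect hm₁ hm₂ γ i 1 (by simpa using hi)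
  · simpa [sub_eq_add_neg] using chi_reflect hm₁ hm₂ γ i (-1) (by simpa [Int.even_add] using hi)

theorem chi_mul_conj_self (m₁ m₂ : ℕ) (γ i : ℤ × ℤ) :
    chi m₁ m₂ γ i * (starRingEnd ℂ) (chi m₁ m₂ γ i)
      = ((Real.cos (γ.1 * i.1 * Real.pi / (2 * m₁)) ^ 2 : ℝ) : ℂ) := by
  have harg :
      ((γ.2 : ℂ) * i.2 * Real.pi / (2 * m₂)) = ((γ.2 * i.2 * Real.pi / (2 * m₂) : ℝ) : ℂ) := by
    push_cast; ring
  rw [Complex.mul_conj', chi, harg, norm_mul, Complex.norm_exp_I_mul_ofReal, mul_one,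
    Complex.norm_real, Real.norm_eq_abs, ← Complex.ofReal_pow, sq_abs]

theorem sum_wgt_mul_cos_sq {m₁ m₂ : ℕ} (hm₁ : m₁ ≠ 0) (hm₂ : m₂ ≠ 0) {g : ℤ}
    (h₀ : 0 ≤ g) (h₂ : g ≤ 2 * m₁) :
    ∑ i ∈ IdxF m₁ m₂, wgt m₁ m₂ i * Real.cos (g * i.1 * Real.pi / (2 * m₁)) ^ 2
      = if g = 0 ∨ g = 2 * (m₁ : ℤ) then 1 else 1 / 2 := by
  set c : ℤ → ℝ := fun a => Real.cos (g * a * Real.pi / (2 * m₁)) ^ 2 with hc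
  have hc_reflect : ∀ a, c (2 * m₁ - a) = c a := by
    intro a
    have h : Real.cos (g * ((2 * m₁ - a : ℤ) : ℝ) * Real.pi / (2 * m₁))
        = (-1) ^ g * Real.cos (g * a * Real.pi / (2 * m₁)) := by
      rw [← Real.cos_int_mul_pi_sub]
      congr 1
      push_cast
      field_simp
    simp only [hc, ← sq_abs (Real.cos _), h, abs_mul, abs_neg_one_zpow, one_mul]
  have hweight : ∀ a ∈ Icc (0 : ℤ) m₁, (if a = m₁ then m₂ else 2 * m₂) • (wgt m₁ m₂ (a, 0) * c a)
      = (if a = 0 ∨ a = m₁ then 1 else 2) • (c a / (2 * m₁)) := by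
    intro a ha
    have : ¬(a = 0 ∧ a = m₁) := by omega
    simp only [wgt, nsmul_eq_mul]
    split_ifs <;> first | tauto | (push_cast; field_simp; ring)
  calc ∑ i ∈ IdxF m₁ m₂, wgt m₁ m₂ i * Real.cos (g * i.1 * Real.pi / (2 * m₁)) ^ 2
      = ∑ a ∈ Icc (0 : ℤ) m₁, (if a = m₁ then m₂ else 2 * m₂) • (wgt m₁ m₂ (a, 0) * c a) :=
        sum_IdxF_eq_sum_fst m₁ m₂ (fun a => wgt m₁ m₂ (a, 0) * c a)
    _ = ∑ k ∈ range (2 * m₁), c k / (2 * m₁) := by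
        rw [sum_congr rfl hweight, sum_Icc_trapezoid_eq_sum_Ico (by omega) _
          (fun a => by simp only [hc_reflect])]
        exact_mod_cast Int.sum_Ico_zero_eq_sum_range (2 * m₁) (fun a => c a / (2 * m₁))
    _ = if g = 0 ∨ g = 2 * (m₁ : ℤ) then 1 else 1 / 2 := by
        rw [← sum_div, hc]
        simp only [Int.cast_natCast]
        rw [sum_range_cos_sq]
        simp only [Int.dvd_iff_eq_zero_or_eq (by omega) h₀ h₂]
        split_ifs <;> field_simp

theorem innerW_chi_self {m₁ m₂ : ℕ} (hm₁ : m₁ ≠ 0) (hm₂ : m₂ ≠ 0) {γ : ℤ × ℤ}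
    (h₀ : 0 ≤ γ.1) (h₂ : γ.1 ≤ 2 * m₁) :
    innerW m₁ m₂ (chi m₁ m₂ γ) (chi m₁ m₂ γ)
      = if γ.1 = 0 ∨ γ.1 = 2 * (m₁ : ℤ) then 1 else 1 / 2 := by
  rw [innerW, sum_congr rfl fun i _ => by rw [mul_assoc, chi_mul_conj_self, ← Complex.ofReal_mul],
    ← Complex.ofReal_sum, sum_wgt_mul_cos_sq hm₁ hm₂ h₀ h₂]
  split_ifs <;> simp

namespace IsSpectral

variable {m₁ m₂ : ℕ} {Γ : Finset (ℤ × ℤ)}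

theorem card_eq (hΓ : IsSpectral m₁ m₂ Γ) : #Γ = #(IdxF m₁ m₂) := by
  have b := Module.Basis.mk hΓ.2.2.2.1 hΓ.2.2.2.2.ge
  simpa using (Module.finrank_eq_card_basis b).symm

theorem eq_of_chi_eq (hΓ : IsSpectral m₁ m₂ Γ) {γ δ : ℤ × ℤ} (hγ : γ ∈ Γ) (hδ : δ ∈ Γ)
    (h : ∀ i ∈ IdxF m₁ m₂, chi m₁ m₂ γ i = chi m₁ m₂ δ i) : γ = δ :=
  congrArg Subtype.val (hΓ.2.2.2.1.injective (a₁ := ⟨γ, hγ⟩) (a₂ := ⟨δ, hδ⟩)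
    (funext fun i => h i.1 i.2))

theorem flipOp_notMem (hΓ : IsSpectral m₁ m₂ Γ) (hm₁ : m₁ ≠ 0) (hm₂ : m₂ ≠ 0) {γ : ℤ × ℤ}
    (hγ : γ ∈ Γ) : flipOp m₁ m₂ γ ∉ Γ := fun hflip =>
  flipOp_ne_self hm₂ m₁ γ <|
    hΓ.eq_of_chi_eq hflip hγ fun _ hi => chi_flipOp hm₁ hm₂ γ (even_of_mem_IdxF hi)

end IsSpectral

/-- Corollary 5.3: every spectral index set `Γ^{(m)}` is of the form `Γ^{(m)}_Ω`
for some `Ω ⊆ Γ^{(m)}_□`, and the basis functions have the stated norms. -/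
theorem spectral_set_characterization (m₁ m₂ : ℕ) (hm₁ : 0 < m₁) (hm₂ : 0 < m₂)
    (Γ : Finset (ℤ × ℤ)) (hΓ : IsSpectral m₁ m₂ Γ) :
    (∃ Ω ⊆ GammaSq m₁ m₂,
      Γ = (GammaSq m₁ m₂ \ Ω) ∪
        ((KSet m₁ m₂).filter (fun γ => flipOp m₁ m₂ γ ∈ Ω))) ∧
    (∀ γ ∈ Γ, innerW m₁ m₂ (chi m₁ m₂ γ) (chi m₁ m₂ γ) =
      if γ.1 = 0 ∨ γ.1 = 2 * (m₁ : ℤ) then 1 else 1 / 2) := by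
  refine ⟨⟨GammaSq m₁ m₂ \ Γ, sdiff_subset, ?_⟩, fun γ hγ => ?_⟩
  · refine eq_sdiff_union_filter_of_card_le (flipOp_injOn m₁ m₂) hΓ.1 (fun γ hγ hγS => ?_) ?_
    · exact mem_sdiff.2 ⟨flipOp_mem_GammaSq (hΓ.1 hγ) (hΓ.2.1 γ hγ) hγS,
        hΓ.flipOp_notMem hm₁.ne' hm₂.ne' hγ⟩
    · rw [card_GammaSq, ← card_IdxF, hΓ.card_eq]
  · obtain ⟨⟨h₀, h₂⟩, -⟩ := mem_KSet.1 (hΓ.1 hγ)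
    exact innerW_chi_self hm₁.ne' hm₂.ne' h₀ h₂
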